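/- arXiv:2502.20403 — 2 statements merged into one kernel-verified Lean document; each statement's English description precedes it below -/
import Mathlib

section
/- Let d, d_a be natural numbers, d₊ = d + d_a, and N = 2^{d₊}. Let E₁, …, E_n be Kraus-form quantum channels on N×N complex matrices, let Û₀ be a 2^d×2^d unitary matrix, and let Û₁, …, Û_n be N×N unitary matrices. Let σ be a 2^d×2^d density matrix, let a ∈ ℂ^{2^{d_a}} be a unit vector, and let Π be an N×N matrix with 0 ≤ Π ≤ I. Define y = Tr(Π · (E_n ∘ ⋯ ∘ E₁)(σ ⊗ aaᴴ)) and ŷ = Tr(Π · (Ad_{Û_n} ∘ E_n ∘ ⋯ ∘ Ad_{Û₁} ∘ E₁)((Û₀ σ Û₀ᴴ) ⊗ aaᴴ)), where Ad_U(ρ) = U ρ Uᴴ and ⊗ is the Kronecker product. Then |y − ŷ| ≤ inf_{φ₀ ∈ ℂ, |φ₀| = 1} ‖I_{2^d} − φ₀ Û₀‖_op + Σ_{i=1}^n inf_{φ_i ∈ ℂ, |φ_i| = 1} ‖I_N − φ_i Û_i‖_op. -/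
/-! Work in the Heisenberg picture: Kraus channels, unitary conjugations and the isometric
embedding `ρ ↦ ρ ⊗ aaᴴ` all pull effects `0 ≤ M ≤ 1` back to effects. A hybrid argument swaps in
the attacked gates one at a time, so it suffices to bound a single swap. For an effect `M`, a
density matrix `ρ` and a unitary `W`, the shifted observable `A = M - 1/2` has `‖A‖ ≤ 1/2`, and
`tr (M ρ) - tr (M W ρ Wᴴ) = tr (A (1 - W) ρ) + tr ((1 - Wᴴ) A W ρ)` because `tr (W ρ Wᴴ) = tr ρ`;
with `|tr (X ρ)| ≤ ‖X‖` this is at most `‖1 - W‖`. Finally `W ρ Wᴴ` does not see a global phase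
of `W`, so the bound holds for every `φ • V` with `|φ| = 1`. -/

open Matrix
open scoped Kronecker ComplexOrder

/-- The ℓ²-operator norm (largest singular value) of a complex square matrix. -/
noncomputable def opNorm {n : ℕ} (A : Matrix (Fin n) (Fin n) ℂ) : ℝ :=
  ‖Matrix.toEuclideanCLM (𝕜 := ℂ) A‖

/-- A Kraus-form quantum channel: `Φ ρ = ∑ j, K j * ρ * (K j)ᴴ` for a finite family
of matrices with `∑ j, (K j)ᴴ * K j = 1`. -/
def IsKrausChannel {N : ℕ}
    (Φ : Matrix (Fin N) (Fin N) ℂ → Matrix (Fin N) (Fin N) ℂ) : Prop :=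
  ∃ (m : ℕ) (K : Fin m → Matrix (Fin N) (Fin N) ℂ),
    (∑ j, (K j)ᴴ * K j = 1) ∧ ∀ ρ, Φ ρ = ∑ j, K j * ρ * (K j)ᴴ

open scoped Matrix.Norms.L2Operator MatrixOrder InnerProductSpace

theorem CStarAlgebra.norm_sub_half_le_half {A : Type*} [CStarAlgebra A] [PartialOrder A]
    [StarOrderedRing A] {a : A} (h0 : 0 ≤ a) (h1 : a ≤ 1) :
    ‖a - algebraMap ℝ A 2⁻¹‖ ≤ 2⁻¹ := by
  have ha : IsSelfAdjoint a := .of_nonneg h0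
  have hle : ∀ x ∈ spectrum ℝ a, x ≤ 1 :=
    (le_algebraMap_iff_spectrum_le (A := A)).mp (by simpa using h1)
  rw [← cfc_id' ℝ a, ← cfc_const (2⁻¹ : ℝ) a, ← cfc_sub ..]
  refine norm_cfc_le (by norm_num) fun x hx => ?_
  rw [Real.norm_eq_abs, abs_le]
  constructor <;> linarith [spectrum_nonneg_of_nonneg h0 hx, hle x hx]

namespace Matrix

variable {m n : Type*} [Fintype m] [DecidableEq m] [Fintype n] [DecidableEq n]

def IsDensityMatrix (ρ : Matrix n n ℂ) : Prop := ρ.PosSemidef ∧ ρ.trace = 1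

def IsEffect (M : Matrix n n ℂ) : Prop := M.PosSemidef ∧ (1 - M).PosSemidef

theorem mul_mul_conjTranspose_apply_self_eq_inner (C Y : Matrix n n ℂ) (i : n) :
    (C * Y * Cᴴ) i i =
      ⟪WithLp.toLp 2 (star (C i)), toEuclideanCLM (𝕜 := ℂ) Y (WithLp.toLp 2 (star (C i)))⟫_ℂ := by
  simp only [toEuclideanCLM_toLp, EuclideanSpace.inner_toLp_toLp, star_star, mul_apply,
    conjTranspose_apply, dotProduct, mulVec, Finset.sum_mul, Pi.star_apply]
  rw [Finset.sum_comm]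
  exact Finset.sum_congr rfl fun _ _ => Finset.sum_congr rfl fun _ _ => by ring

theorem norm_trace_mul_le (X : Matrix n n ℂ) {ρ : Matrix n n ℂ} (hρ : ρ.PosSemidef) :
    ‖(X * ρ).trace‖ ≤ ‖X‖ * ‖ρ.trace‖ := by
  obtain ⟨C, rfl⟩ := CStarAlgebra.nonneg_iff_eq_star_mul_self.mp hρ.nonneg
  set v : n → EuclideanSpace ℂ n := fun i => WithLp.toLp 2 (star (C i))
  have htrace (Y : Matrix n n ℂ) :
      (Y * (star C * C)).trace = ∑ i, ⟪v i, toEuclideanCLM (𝕜 := ℂ) Y (v i)⟫_ℂ := by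
    rw [← Matrix.mul_assoc, trace_mul_comm, ← Matrix.mul_assoc, trace]
    exact Finset.sum_congr rfl fun i _ => mul_mul_conjTranspose_apply_self_eq_inner C Y i
  have hnorm : ‖(star C * C).trace‖ = ∑ i, ‖v i‖ ^ 2 := by
    rw [← one_mul (star C * C), htrace]
    simp only [map_one, one_apply_eq_self, inner_self_eq_norm_sq_to_K]
    norm_cast
    exact abs_of_nonneg (by positivity)
  calc ‖(X * (star C * C)).trace‖ ≤ ∑ i, ‖X‖ * ‖v i‖ ^ 2 := by
        rw [htrace]
        refine (norm_sum_le _ _).trans (Finset.sum_le_sum fun i _ => ?_)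
        calc _ ≤ ‖v i‖ * ‖toEuclideanCLM (𝕜 := ℂ) X (v i)‖ := norm_inner_le_norm _ _
          _ ≤ ‖v i‖ * (‖X‖ * ‖v i‖) := by gcongr; exact (toEuclideanCLM (𝕜 := ℂ) X).le_opNorm _
          _ = ‖X‖ * ‖v i‖ ^ 2 := by ring
    _ = ‖X‖ * ‖(star C * C).trace‖ := by rw [hnorm, Finset.mul_sum]

theorem IsDensityMatrix.norm_trace_mul_le {ρ : Matrix n n ℂ} (hρ : IsDensityMatrix ρ)
    (X : Matrix n n ℂ) : ‖(X * ρ).trace‖ ≤ ‖X‖ := by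
  simpa [hρ.2] using Matrix.norm_trace_mul_le X hρ.1

theorem trace_conj_of_mem_unitaryGroup {W : Matrix n n ℂ} (hW : W ∈ unitaryGroup n ℂ)
    (ρ : Matrix n n ℂ) : (W * ρ * Wᴴ).trace = ρ.trace := by
  rw [trace_mul_cycle, ← star_eq_conjTranspose, Unitary.star_mul_self_of_mem hW, one_mul]

theorem IsEffect.norm_trace_mul_sub_trace_mul_conj_le {M ρ W : Matrix n n ℂ} (hM : IsEffect M)
    (hρ : IsDensityMatrix ρ) (hW : W ∈ unitaryGroup n ℂ) :
    ‖(M * ρ).trace - (M * (W * ρ * Wᴴ)).trace‖ ≤ ‖1 - W‖ := by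
  set A := M - algebraMap ℝ (Matrix n n ℂ) 2⁻¹
  have hA : ‖A‖ ≤ 2⁻¹ := CStarAlgebra.norm_sub_half_le_half hM.1.nonneg (le_iff.mpr hM.2)
  have hdiff : (M * ρ).trace - (M * (W * ρ * Wᴴ)).trace
      = (A * (1 - W) * ρ).trace + ((1 - Wᴴ) * A * W * ρ).trace := calc
    _ = (A * ρ).trace - (A * (W * ρ * Wᴴ)).trace := by
      simp only [A, sub_mul, trace_sub, Algebra.algebraMap_eq_smul_one, smul_mul, one_mul,
        trace_smul, trace_conj_of_mem_unitaryGroup hW]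
      ring
    _ = (A * ρ).trace - (Wᴴ * A * W * ρ).trace := by
      rw [← Matrix.mul_assoc, ← Matrix.mul_assoc, trace_mul_cycle]
      simp only [Matrix.mul_assoc]
    _ = _ := by
      rw [← trace_sub, ← trace_add]
      congr 1
      noncomm_ring
  rw [hdiff]
  calc _ ≤ ‖A * (1 - W)‖ + ‖(1 - Wᴴ) * A * W‖ :=
        (norm_add_le _ _).trans (add_le_add (hρ.norm_trace_mul_le _) (hρ.norm_trace_mul_le _))
    _ ≤ ‖A‖ * ‖1 - W‖ + ‖1 - Wᴴ‖ * ‖A‖ := by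
        rw [CStarRing.norm_mul_mem_unitary _ hW]
        gcongr <;> exact norm_mul_le _ _
    _ ≤ ‖1 - W‖ := by
        rw [show (1 : Matrix n n ℂ) - Wᴴ = star (1 - W) by simp [star_eq_conjTranspose], norm_star]
        nlinarith [norm_nonneg (1 - W)]

theorem IsEffect.norm_trace_mul_sub_trace_mul_conj_le_iInf {M ρ V : Matrix n n ℂ}
    (hM : IsEffect M) (hρ : IsDensityMatrix ρ) (hV : V ∈ unitaryGroup n ℂ) :
    ‖(M * ρ).trace - (M * (V * ρ * Vᴴ)).trace‖ ≤
      ⨅ φ : {z : ℂ // ‖z‖ = 1}, ‖1 - (φ : ℂ) • V‖ := by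
  have : Nonempty {z : ℂ // ‖z‖ = 1} := ⟨⟨1, norm_one⟩⟩
  refine le_ciInf fun ⟨φ, hφ⟩ => ?_
  have hφ' : φ ∈ unitary ℂ :=
    Unitary.mem_iff_star_mul_self.mpr (by simp [Complex.conj_mul', hφ])
  have hphase : V * ρ * Vᴴ = (φ • V) * ρ * (φ • V)ᴴ := by
    rw [conjTranspose_smul, smul_mul_assoc, smul_mul, mul_smul_comm, smul_smul]
    simp [Complex.mul_conj', hφ]
  rw [hphase]
  exact hM.norm_trace_mul_sub_trace_mul_conj_le hρ (Unitary.smul_mem_of_mem hφ' hV)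

def MapsDensityMatrices (Φ : Matrix m m ℂ → Matrix n n ℂ) : Prop :=
  ∀ ρ, IsDensityMatrix ρ → IsDensityMatrix (Φ ρ)

def HasEffectDual (Φ : Matrix m m ℂ → Matrix n n ℂ) : Prop :=
  ∀ M, IsEffect M → ∃ M', IsEffect M' ∧ ∀ ρ, (M * Φ ρ).trace = (M' * ρ).trace

section Kraus

variable {ι : Type*} [Fintype ι] {K : ι → Matrix n m ℂ}

omit [DecidableEq m] [DecidableEq n] in
theorem trace_mul_sum_mul_mul_conjTranspose (K : ι → Matrix n m ℂ) (M : Matrix n n ℂ)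
    (ρ : Matrix m m ℂ) :
    (M * ∑ i, K i * ρ * (K i)ᴴ).trace = ((∑ i, (K i)ᴴ * M * K i) * ρ).trace := by
  simp only [Finset.mul_sum, Finset.sum_mul, trace_sum]
  refine Finset.sum_congr rfl fun i _ => ?_
  rw [← Matrix.mul_assoc, ← Matrix.mul_assoc, trace_mul_comm]
  simp only [Matrix.mul_assoc]

theorem mapsDensityMatrices_kraus (hK : ∑ i, (K i)ᴴ * K i = 1) :
    MapsDensityMatrices fun ρ : Matrix m m ℂ => ∑ i, K i * ρ * (K i)ᴴ := by
  refine fun ρ hρ => ⟨posSemidef_sum _ fun i _ => hρ.1.mul_mul_conjTranspose_same _, ?_⟩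
  beta_reduce
  rw [← Matrix.one_mul (∑ i, K i * ρ * (K i)ᴴ), trace_mul_sum_mul_mul_conjTranspose]
  simp [hK, hρ.2]

theorem hasEffectDual_kraus (hK : ∑ i, (K i)ᴴ * K i = 1) :
    HasEffectDual fun ρ : Matrix m m ℂ => ∑ i, K i * ρ * (K i)ᴴ := by
  refine fun M hM => ⟨∑ i, (K i)ᴴ * M * K i, ⟨?_, ?_⟩, trace_mul_sum_mul_mul_conjTranspose K M⟩
  · exact posSemidef_sum _ fun i _ => hM.1.conjTranspose_mul_mul_same _
  · have h : 1 - ∑ i, (K i)ᴴ * M * K i = ∑ i, (K i)ᴴ * (1 - M) * K i := by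
      simp [Matrix.mul_sub, Matrix.sub_mul, Finset.sum_sub_distrib, hK]
    rw [h]
    exact posSemidef_sum _ fun i _ => hM.2.conjTranspose_mul_mul_same _

end Kraus

theorem mapsDensityMatrices_conj {W : Matrix n m ℂ} (hW : Wᴴ * W = 1) :
    MapsDensityMatrices fun ρ : Matrix m m ℂ => W * ρ * Wᴴ := by
  simpa using mapsDensityMatrices_kraus (K := fun _ : Unit => W) (by simpa using hW)

theorem hasEffectDual_conj {W : Matrix n m ℂ} (hW : Wᴴ * W = 1) :
    HasEffectDual fun ρ : Matrix m m ℂ => W * ρ * Wᴴ := by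
  simpa using hasEffectDual_kraus (K := fun _ : Unit => W) (by simpa using hW)

theorem HasEffectDual.comp {l : Type*} [Fintype l] [DecidableEq l]
    {Ψ : Matrix n n ℂ → Matrix l l ℂ} {Φ : Matrix m m ℂ → Matrix n n ℂ}
    (hΨ : HasEffectDual Ψ) (hΦ : HasEffectDual Φ) : HasEffectDual (Ψ ∘ Φ) := fun M hM => by
  obtain ⟨M', hM', hΨM⟩ := hΨ M hM
  obtain ⟨M'', hM'', hΦM'⟩ := hΦ M' hM'
  exact ⟨M'', hM'', fun ρ => (hΨM _).trans (hΦM' ρ)⟩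

theorem HasEffectDual.foldl {l : List (Matrix n n ℂ → Matrix n n ℂ)}
    (hl : ∀ Φ ∈ l, HasEffectDual Φ) : HasEffectDual fun ρ => l.foldl (fun ρ Φ => Φ ρ) ρ := by
  induction l with
  | nil => exact fun M hM => ⟨M, hM, fun _ => rfl⟩
  | cons Φ l ih =>
    exact (ih fun Ψ hΨ => hl Ψ (List.mem_cons_of_mem Φ hΨ)).comp (hl Φ List.mem_cons_self)

theorem HasEffectDual.foldl_ofFn {k : ℕ} {F : Fin k → Matrix n n ℂ → Matrix n n ℂ}
    (hF : ∀ i, HasEffectDual (F i)) :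
    HasEffectDual fun ρ => (List.ofFn F).foldl (fun ρ Φ => Φ ρ) ρ :=
  HasEffectDual.foldl fun Φ hΦ => by
    obtain ⟨i, rfl⟩ := List.mem_ofFn.mp hΦ
    exact hF i

theorem HasEffectDual.norm_trace_sub_conj_le_iInf {Φ : Matrix m m ℂ → Matrix n n ℂ}
    (hΦ : HasEffectDual Φ) {M : Matrix n n ℂ} (hM : IsEffect M) {ρ V : Matrix m m ℂ}
    (hρ : IsDensityMatrix ρ) (hV : V ∈ unitaryGroup m ℂ) :
    ‖(M * Φ ρ).trace - (M * Φ (V * ρ * Vᴴ)).trace‖ ≤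
      ⨅ φ : {z : ℂ // ‖z‖ = 1}, ‖1 - (φ : ℂ) • V‖ := by
  obtain ⟨M', hM', hdual⟩ := hΦ M hM
  rw [hdual, hdual]
  exact hM'.norm_trace_mul_sub_trace_mul_conj_le_iInf hρ hV

theorem norm_trace_foldl_ofFn_sub_le {k : ℕ} (E : Fin k → Matrix n n ℂ → Matrix n n ℂ)
    (hEdensity : ∀ i, MapsDensityMatrices (E i)) (hEdual : ∀ i, HasEffectDual (E i))
    (U : Fin k → Matrix n n ℂ) (hU : ∀ i, U i ∈ unitaryGroup n ℂ) {M ρ : Matrix n n ℂ}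
    (hM : IsEffect M) (hρ : IsDensityMatrix ρ) :
    ‖(M * (List.ofFn E).foldl (fun ρ Φ => Φ ρ) ρ).trace -
        (M * (List.ofFn fun i ρ => U i * E i ρ * (U i)ᴴ).foldl (fun ρ Φ => Φ ρ) ρ).trace‖ ≤
      ∑ i, ⨅ φ : {z : ℂ // ‖z‖ = 1}, ‖1 - (φ : ℂ) • U i‖ := by
  induction k generalizing ρ with
  | zero => simp
  | succ k ih =>
    have hattacked : HasEffectDual fun τ =>
        (List.ofFn fun i ρ => U i.succ * E i.succ ρ * (U i.succ)ᴴ).foldl (fun ρ Φ => Φ ρ) τ :=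
      HasEffectDual.foldl_ofFn fun i =>
        (hasEffectDual_conj (Unitary.star_mul_self_of_mem (hU i.succ))).comp (hEdual i.succ)
    have hρ₁ := hEdensity 0 ρ hρ
    simp only [List.ofFn_succ, List.foldl_cons, Fin.sum_univ_succ]
    refine (norm_sub_le_norm_sub_add_norm_sub _ _ _).trans ((add_le_add
      (ih _ (fun i => hEdensity i.succ) (fun i => hEdual i.succ) _ (fun i => hU i.succ) hρ₁)
      (hattacked.norm_trace_sub_conj_le_iInf hM hρ₁ (hU 0))).trans_eq (add_comm _ _))

theorem _root_.IsKrausChannel.mapsDensityMatrices {N : ℕ}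
    {Φ : Matrix (Fin N) (Fin N) ℂ → Matrix (Fin N) (Fin N) ℂ} (hΦ : IsKrausChannel Φ) :
    MapsDensityMatrices Φ := by
  obtain ⟨_, K, hK, hΦK⟩ := hΦ
  exact funext hΦK ▸ mapsDensityMatrices_kraus hK

theorem _root_.IsKrausChannel.hasEffectDual {N : ℕ}
    {Φ : Matrix (Fin N) (Fin N) ℂ → Matrix (Fin N) (Fin N) ℂ} (hΦ : IsKrausChannel Φ) :
    HasEffectDual Φ := by
  obtain ⟨_, K, hK, hΦK⟩ := hΦ
  exact funext hΦK ▸ hasEffectDual_kraus hK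

section Ancilla

variable {k : Type*} [Fintype k]

/-- The matrix of the isometry `ψ ↦ ψ ⊗ a`. -/
def tensorAncilla (a : k → ℂ) : Matrix (m × k) m ℂ :=
  Matrix.of fun p i => if p.1 = i then a p.2 else 0

omit [Fintype k] in
theorem kronecker_vecMulVec_star_eq (a : k → ℂ) (ρ : Matrix m m ℂ) :
    ρ ⊗ₖ vecMulVec a (star a) = tensorAncilla (m := m) a * ρ * (tensorAncilla (m := m) a)ᴴ := by
  refine Matrix.ext fun ⟨i, j⟩ ⟨i', j'⟩ => ?_
  simp [tensorAncilla, Matrix.mul_apply, vecMulVec_apply, apply_ite (starRingEnd ℂ), eq_comm]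
  ring

theorem conjTranspose_tensorAncilla_mul_self (a : k → ℂ) :
    (tensorAncilla (m := m) a)ᴴ * tensorAncilla (m := m) a = (star a ⬝ᵥ a) • 1 := by
  refine Matrix.ext fun i i' => ?_
  simp [tensorAncilla, Matrix.mul_apply, Fintype.sum_prod_type, one_apply, dotProduct,
    apply_ite (starRingEnd ℂ), eq_comm]

theorem exists_isometry_reindex_kronecker_vecMulVec_star {N : Type*} [Fintype N]
    (e : m × k ≃ N) {a : k → ℂ} (ha : ∑ i, ‖a i‖ ^ 2 = 1) :
    ∃ B : Matrix N m ℂ, Bᴴ * B = 1 ∧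
      ∀ ρ, reindex e e (ρ ⊗ₖ vecMulVec a (star a)) = B * ρ * Bᴴ := by
  have hunit : star a ⬝ᵥ a = 1 := by
    simp only [dotProduct, Pi.star_apply, Complex.star_def, Complex.conj_mul']
    exact_mod_cast ha
  refine ⟨reindex e (.refl m) (tensorAncilla a), ?_, fun ρ => ?_⟩
  · rw [conjTranspose_reindex]
    refine (reindexLinearEquiv_mul ℂ ℂ (.refl m) e (.refl m) _ _).trans ?_
    simp [conjTranspose_tensorAncilla_mul_self, hunit]
  · rw [kronecker_vecMulVec_star_eq]
    rfl

end Ancilla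

end Matrix

/-- Theorem 1: the shift in predictive confidence caused by inserting adversarial
unitary gates within the intermediate layers of a quantum classifier is bounded by
the sum of the phase-optimized operator-norm distances of the gates to the identity. -/
theorem confidence_shift_opNorm_bound (d da n : ℕ)
    (E : Fin n → Matrix (Fin (2 ^ (d + da))) (Fin (2 ^ (d + da))) ℂ →
      Matrix (Fin (2 ^ (d + da))) (Fin (2 ^ (d + da))) ℂ)
    (hE : ∀ i, IsKrausChannel (E i))
    (U0 : Matrix (Fin (2 ^ d)) (Fin (2 ^ d)) ℂ)
    (hU0 : U0 ∈ Matrix.unitaryGroup (Fin (2 ^ d)) ℂ)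
    (U : Fin n → Matrix (Fin (2 ^ (d + da))) (Fin (2 ^ (d + da))) ℂ)
    (hU : ∀ i, U i ∈ Matrix.unitaryGroup (Fin (2 ^ (d + da))) ℂ)
    (σ : Matrix (Fin (2 ^ d)) (Fin (2 ^ d)) ℂ)
    (hσ : σ.PosSemidef ∧ σ.trace = 1)
    (a : Fin (2 ^ da) → ℂ) (ha : ∑ i, ‖a i‖ ^ 2 = 1)
    (Pk : Matrix (Fin (2 ^ (d + da))) (Fin (2 ^ (d + da))) ℂ)
    (hPk : Pk.PosSemidef ∧ (1 - Pk).PosSemidef)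
    -- the Kronecker-product embedding `ρ ⊗ aaᴴ`, reindexed to live on `Fin (2 ^ (d + da))`
    (emb : Matrix (Fin (2 ^ d)) (Fin (2 ^ d)) ℂ →
      Matrix (Fin (2 ^ (d + da))) (Fin (2 ^ (d + da))) ℂ)
    (hemb : ∀ ρ, emb ρ =
      Matrix.reindex (finProdFinEquiv.trans (finCongr (pow_add 2 d da).symm))
        (finProdFinEquiv.trans (finCongr (pow_add 2 d da).symm))
        (ρ ⊗ₖ Matrix.vecMulVec a (star a)))
    -- y : predictive confidence of the unattacked classifier
    (y : ℂ) (hy : y = Matrix.trace (Pk *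
      (List.ofFn E).foldl (fun ρ Φ => Φ ρ) (emb σ)))
    -- ŷ : predictive confidence of the attacked classifier
    (yhat : ℂ) (hyhat : yhat = Matrix.trace (Pk *
      (List.ofFn (fun i => fun ρ => U i * E i ρ * (U i)ᴴ)).foldl (fun ρ Φ => Φ ρ)
        (emb (U0 * σ * U0ᴴ)))) :
    ‖y - yhat‖ ≤
      (⨅ φ : {z : ℂ // ‖z‖ = 1}, opNorm (1 - (φ : ℂ) • U0)) +
        ∑ i, ⨅ φ : {z : ℂ // ‖z‖ = 1}, opNorm (1 - (φ : ℂ) • U i) := by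
  obtain ⟨B, hB, hembB⟩ := exists_isometry_reindex_kronecker_vecMulVec_star
    (finProdFinEquiv.trans (finCongr (pow_add 2 d da).symm)) ha
  obtain rfl : emb = fun ρ => B * ρ * Bᴴ := funext fun ρ => (hemb ρ).trans (hembB ρ)
  have hencoding := ((HasEffectDual.foldl_ofFn fun i => (hE i).hasEffectDual).comp
    (hasEffectDual_conj hB)).norm_trace_sub_conj_le_iInf hPk hσ hU0
  have hlayers := norm_trace_foldl_ofFn_sub_le E (fun i => (hE i).mapsDensityMatrices)
    (fun i => (hE i).hasEffectDual) U hU hPk (mapsDensityMatrices_conj hB _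
      (mapsDensityMatrices_conj (Unitary.star_mul_self_of_mem hU0) σ hσ))
  rw [hy, hyhat]
  exact (norm_sub_le_norm_sub_add_norm_sub _ _ _).trans (add_le_add hencoding hlayers)
end

section
/- Let D ≥ 1, let μ be the Haar probability measure on U(D), let e₀ ∈ ℂ^D be the first standard basis vector, and write X_W = W e₀ e₀ᴴ Wᴴ. Then for any D×D complex matrices M₁ and M₂, ∫_{U(D)} Tr(M₁ X_W) · Tr(M₂ X_W) dμ(W) = (Tr(M₁) Tr(M₂) + Tr(M₁ M₂)) / (D(D+1)). -/
/-!
Write `w` for the `j`-th column of a Haar-random unitary `W`, so that `W e_j e_jᴴ Wᴴ = w wᴴ` and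
the integrand expands into the fourth moments `E[w_a w̄_b w_c w̄_d]`. Left invariance under diagonal
phase matrices kills every moment whose indices do not pair up as `a = b, c = d` or `a = d, c = b`.
Left invariance under the four unitaries sending `w_a` to `(1 + i)/2 (w_a + ω w_c)`, `ω⁴ = 1`,
averages away the cross terms and gives `E|w_a|⁴ = E|w_c|⁴ = 2 E|w_a|²|w_c|²` for `a ≠ c`.
Finally `‖w‖ = 1` fixes the scale: `E|w_a|²|w_c|² = 1/(D(D+1))`.
-/

open Matrix MeasureTheory

/-- The entrywise measurable space structure on matrices. -/
noncomputable local instance {m n : Type*} : MeasurableSpace (Matrix m n ℂ) :=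
  inferInstanceAs (MeasurableSpace (m → n → ℂ))

/-- The first standard basis vector of `ℂ^D`. -/
noncomputable def e0 {D : ℕ} : Fin D → ℂ := fun i => if (i : ℕ) = 0 then 1 else 0

open Complex ComplexConjugate

theorem IsStarProjection.smul_add_one_sub_mem_unitary {R : Type*} [Ring R] [StarRing R]
    [Algebra ℂ R] [StarModule ℂ R] {p : R} (hp : IsStarProjection p) {z : ℂ}
    (hz : z ∈ unitary ℂ) : z • p + (1 - p) ∈ unitary R := by
  rw [Unitary.mem_iff]
  simp only [star_add, star_smul, star_sub, star_one, hp.isSelfAdjoint.star_eq, add_mul, mul_add,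
    smul_mul_assoc, mul_smul_comm, hp.isIdempotentElem.eq, hp.mul_one_sub_self,
    hp.one_sub_mul_self, (isStarProjection_one_sub_iff.mpr hp).isIdempotentElem.eq, smul_zero,
    add_zero, zero_add, smul_smul, Unitary.star_mul_self_of_mem hz,
    Unitary.mul_star_self_of_mem hz, one_smul, add_sub_cancel, and_self]

theorem Pi.mulSingle_mem_unitary {ι α : Type*} [DecidableEq ι] [Monoid α] [StarMul α] {i : ι}
    {x : α} (hx : x ∈ unitary α) : Pi.mulSingle i x ∈ unitary (ι → α) := by
  rw [Unitary.mem_iff] at hx ⊢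
  constructor <;> ext k <;> by_cases hk : k = i <;> simp [hk, hx]

theorem Complex.sum_quartic_smul_add_mul_fourth_root (s x y : ℂ) :
    ∑ k : Fin 4, s * (x + ![1, I, -1, -I] k * y) * conj (s * (x + ![1, I, -1, -I] k * y)) *
      (s * (x + ![1, I, -1, -I] k * y) * conj (s * (x + ![1, I, -1, -I] k * y))) =
    4 * (s * conj s) ^ 2 * (x * conj x * (x * conj x) + y * conj y * (y * conj y) +
      4 * (x * conj x * (y * conj y))) := by
  simp only [Fin.sum_univ_four, Matrix.cons_val, map_mul, map_add, map_neg, map_one, conj_I]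
  ring_nf
  simp only [I_sq, I_pow_four]
  ring

namespace Matrix

variable {n : Type*} [Fintype n]

theorem isStarProjection_vecMulVec {α : Type*} [CommRing α] [StarRing α] {v : n → α}
    (hv : star v ⬝ᵥ v = 1) : IsStarProjection (vecMulVec v (star v)) where
  isIdempotentElem := by rw [IsIdempotentElem, vecMulVec_mul_vecMulVec, hv, one_smul]
  isSelfAdjoint := by rw [IsSelfAdjoint, star_eq_conjTranspose, conjTranspose_vecMulVec, star_star]

variable [DecidableEq n]

theorem diagonal_mem_unitaryGroup {α : Type*} [CommRing α] [StarRing α] {z : n → α}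
    (hz : z ∈ unitary (n → α)) : diagonal z ∈ unitaryGroup n α := by
  rw [mem_unitaryGroup_iff, star_eq_conjTranspose, diagonal_conjTranspose, diagonal_mul_diagonal]
  exact congrArg diagonal (Unitary.mul_star_self_of_mem hz) |>.trans diagonal_one

/-- The unitary `I • P + (1 - P)`, with `P` the projection onto a suitable unit vector in
`span {e a, e c}`. -/
theorem exists_mem_unitaryGroup_row_eq {a c : n} (hac : a ≠ c) {ω : ℂ} (hω : ω ∈ unitary ℂ) :
    ∃ U ∈ unitaryGroup n ℂ, U a = ((1 + I) / 2) • (Pi.single a 1 + Pi.single c ω) := by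
  have hωω : conj ω * ω = 1 := Unitary.star_mul_self_of_mem hω
  set v : n → ℂ := Pi.single a ((1 + I) / 2) + Pi.single c (-((1 - I) / 2 * conj ω))
  have hv : star v ⬝ᵥ v = 1 := by
    simp [v, hac, hac.symm]
    linear_combination (1 / 2 : ℂ) * hωω - (1 + ω * conj ω) / 4 * I_sq
  refine ⟨I • vecMulVec v (star v) + (1 - vecMulVec v (star v)),
    (isStarProjection_vecMulVec hv).smul_add_one_sub_mem_unitary (by simp [Unitary.mem_iff]), ?_⟩
  ext y
  rcases eq_or_ne y a with rfl | hya
  · simp [v, vecMulVec_apply, hac]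
    linear_combination (1 - I) / 4 * I_sq
  rcases eq_or_ne y c with rfl | hyc
  · simp [v, vecMulVec_apply, hac]
    linear_combination -(1 + I) * ω / 4 * I_sq
  · simp [v, vecMulVec_apply, hya, hyc, hya.symm]

theorem UnitaryGroup.sum_mul_conj_apply (W : unitaryGroup n ℂ) (j : n) :
    ∑ a, W a j * conj (W a j) = 1 := by
  simpa [Matrix.mul_apply, mul_comm] using congrFun (congrFun (UnitaryGroup.star_mul_self W) j) j

theorem trace_mul_mul_vecMulVec_single_mul_conjTranspose (M W : Matrix n n ℂ) (j : n) :
    trace (M * (W * vecMulVec (Pi.single j 1) (star (Pi.single j 1)) * Wᴴ)) =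
      ∑ p, ∑ r, M p r * (W r j * conj (W p j)) := by
  simp [trace, mul_apply, vecMulVec_apply, Pi.single_apply]

end Matrix

instance {m n : Type*} [Fintype m] [Fintype n] : BorelSpace (Matrix m n ℂ) :=
  inferInstanceAs (BorelSpace (m → n → ℂ))

section QuarticMoment

variable {n : Type*} [Fintype n] [DecidableEq n] (μ : Measure (unitaryGroup n ℂ)) (j : n)

noncomputable def quarticMoment (a b c d : n) : ℂ :=
  ∫ W, W a j * conj (W b j) * (W c j * conj (W d j)) ∂μ

theorem quarticMoment_swap₁₃ (a b c d : n) :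
    quarticMoment μ j c b a d = quarticMoment μ j a b c d := by
  simp only [quarticMoment]
  congr 1 with W
  ring

theorem quarticMoment_swap_pairs (a b c d : n) :
    quarticMoment μ j c d a b = quarticMoment μ j a b c d := by
  simp only [quarticMoment]
  congr 1 with W
  ring

theorem integrable_quartic [IsFiniteMeasure μ] (a b c d : n) :
    Integrable (fun W : unitaryGroup n ℂ => W a j * conj (W b j) * (W c j * conj (W d j))) μ := by
  have hentry i : Continuous fun W : unitaryGroup n ℂ => W i j :=
    continuous_subtype_val.matrix_elem i j
  refine .of_bound (by continuity : Continuous _).aestronglyMeasurable 1 (ae_of_all _ fun W => ?_)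
  have h i : ‖W i j‖ ≤ 1 := entry_norm_bound_of_unitary W.2 i j
  simp only [norm_mul, RCLike.norm_conj]
  exact mul_le_one₀ (mul_le_one₀ (h a) (norm_nonneg _) (h b)) (by positivity)
    (mul_le_one₀ (h c) (norm_nonneg _) (h d))

theorem sum_quarticMoment_self_self [IsProbabilityMeasure μ] :
    ∑ a, ∑ c, quarticMoment μ j a a c c = 1 := by
  have hrow a : ∑ c, quarticMoment μ j a a c c =
      ∫ W, ∑ c, W a j * conj (W a j) * (W c j * conj (W c j)) ∂μ :=
    (integral_finsetSum _ fun c _ => integrable_quartic μ j a a c c).symm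
  rw [Finset.sum_congr rfl fun a _ => hrow a,
    ← integral_finsetSum _ fun a _ =>
      integrable_finsetSum _ fun c _ => integrable_quartic μ j a a c c]
  simp [← Finset.sum_mul_sum, UnitaryGroup.sum_mul_conj_apply]

variable [μ.IsMulLeftInvariant]

theorem quarticMoment_eq_phase_mul {z : n → ℂ} (hz : z ∈ unitary (n → ℂ)) (a b c d : n) :
    quarticMoment μ j a b c d =
      z a * conj (z b) * (z c * conj (z d)) * quarticMoment μ j a b c d := by
  let U : unitaryGroup n ℂ := ⟨diagonal z, diagonal_mem_unitaryGroup hz⟩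
  calc quarticMoment μ j a b c d
      = ∫ W, (U * W) a j * conj ((U * W) b j) * ((U * W) c j * conj ((U * W) d j)) ∂μ :=
        (integral_mul_left_eq_self _ U).symm
    _ = _ := by
      simp only [U, UnitaryGroup.mul_val, diagonal_mul, map_mul]
      rw [quarticMoment, ← integral_const_mul]
      congr 1 with W
      ring

theorem quarticMoment_eq_zero {a b c d : n} (h₁ : ¬(a = b ∧ c = d)) (h₂ : ¬(a = d ∧ c = b)) :
    quarticMoment μ j a b c d = 0 := by
  suffices ∃ z ∈ unitary (n → ℂ), z a * conj (z b) * (z c * conj (z d)) ≠ 1 by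
    obtain ⟨z, hz, hne⟩ := this
    exact (mul_left_eq_self₀.mp (quarticMoment_eq_phase_mul μ j hz a b c d).symm).resolve_left hne
  have hI : I ∈ unitary ℂ := by simp [Unitary.mem_iff]
  by_cases hab : a = b
  · have hcd : c ≠ d := fun h => h₁ ⟨hab, h⟩
    subst hab
    refine ⟨Pi.mulSingle c I, Pi.mulSingle_mem_unitary hI, ?_⟩
    by_cases hac : a = c <;> norm_num [hac, hcd.symm, Complex.ext_iff]
  by_cases had : a = d
  · have hcb : c ≠ b := fun h => h₂ ⟨had, h⟩
    subst had
    refine ⟨Pi.mulSingle c I, Pi.mulSingle_mem_unitary hI, ?_⟩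
    by_cases hac : a = c <;> norm_num [hac, hcb.symm, Complex.ext_iff]
  · refine ⟨Pi.mulSingle a I, Pi.mulSingle_mem_unitary hI, ?_⟩
    by_cases hca : c = a <;> norm_num [hca, Ne.symm hab, Ne.symm had, Complex.ext_iff]

theorem four_mul_quarticMoment_self [IsFiniteMeasure μ] {a c : n} (hac : a ≠ c) :
    4 * quarticMoment μ j a a a a =
      quarticMoment μ j a a a a + quarticMoment μ j c c c c + 4 * quarticMoment μ j a a c c := by
  have hω k : ![1, I, -1, -I] k ∈ unitary ℂ := by
    fin_cases k <;> simp [Unitary.mem_iff]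
  choose U hU hrow using fun k => exists_mem_unitaryGroup_row_eq hac (hω k)
  have hmix k (W : unitaryGroup n ℂ) : (⟨U k, hU k⟩ * W : unitaryGroup n ℂ) a j =
      (1 + I) / 2 * (W a j + ![1, I, -1, -I] k * W c j) := by
    simp [mul_apply', hrow, add_dotProduct, mul_add]
  have hs : (1 + I) / 2 * conj ((1 + I) / 2) = 1 / 2 := by
    rw [map_div₀, map_add, map_one, conj_I, map_ofNat]
    linear_combination -I_sq / 4
  set f : unitaryGroup n ℂ → ℂ := fun W => W a j * conj (W a j) * (W a j * conj (W a j))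
  calc 4 * quarticMoment μ j a a a a = ∑ k : Fin 4, ∫ W, f (⟨U k, hU k⟩ * W) ∂μ := by
        rw [Finset.sum_congr rfl fun k _ => integral_mul_left_eq_self f _, Finset.sum_const,
          Finset.card_univ, Fintype.card_fin, nsmul_eq_mul, Nat.cast_ofNat]
        rfl
    _ = ∫ W, ∑ k : Fin 4, f (⟨U k, hU k⟩ * W) ∂μ :=
        (integral_finsetSum _ fun k _ => (integrable_quartic μ j a a a a).comp_mul_left _).symm
    _ = ∫ W, (W a j * conj (W a j) * (W a j * conj (W a j)) +
          W c j * conj (W c j) * (W c j * conj (W c j)) +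
          4 * (W a j * conj (W a j) * (W c j * conj (W c j)))) ∂μ := by
        congr 1 with W
        simp only [f, hmix]
        rw [sum_quartic_smul_add_mul_fourth_root, hs]
        ring
    _ = _ := by
        rw [integral_add, integral_add, integral_const_mul]
        · rfl
        · exact integrable_quartic μ j a a a a
        · exact integrable_quartic μ j c c c c
        · exact (integrable_quartic μ j a a a a).add (integrable_quartic μ j c c c c)
        · exact (integrable_quartic μ j a a c c).const_mul 4

theorem quarticMoment_self_eq_of_ne [IsFiniteMeasure μ] {a c : n} (hac : a ≠ c) :
    quarticMoment μ j a a a a = quarticMoment μ j c c c c ∧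
      2 * quarticMoment μ j a a c c = quarticMoment μ j a a a a := by
  have h₁ := four_mul_quarticMoment_self μ j hac
  have h₂ := four_mul_quarticMoment_self μ j hac.symm
  rw [quarticMoment_swap_pairs μ j a a c c] at h₂
  constructor
  · linear_combination (h₁ - h₂) / 4
  · linear_combination (-3 / 8 : ℂ) * h₁ - 1 / 8 * h₂

variable [IsProbabilityMeasure μ]

theorem quarticMoment_self_self (a c : n) :
    quarticMoment μ j a a c c =
      (1 + if a = c then 1 else 0) / (Fintype.card n * (Fintype.card n + 1)) := by
  set α := quarticMoment μ j a a a a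
  have hdiag x : quarticMoment μ j x x x x = α := by
    rcases eq_or_ne x a with rfl | hxa
    · rfl
    · exact (quarticMoment_self_eq_of_ne μ j hxa).1
  have hval x y : quarticMoment μ j x x y y = α / 2 * (1 + if x = y then 1 else 0) := by
    rcases eq_or_ne x y with rfl | hxy
    · rw [hdiag, if_pos rfl]
      ring
    · rw [if_neg hxy, ← hdiag x, ← (quarticMoment_self_eq_of_ne μ j hxy).2]
      ring
  have hsum := sum_quarticMoment_self_self μ j
  simp only [hval, mul_add, Finset.sum_add_distrib, mul_ite, mul_one, mul_zero, Finset.sum_const,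
    Finset.card_univ, nsmul_eq_mul, Finset.sum_ite_eq, Finset.mem_univ, if_true] at hsum
  have : Nonempty n := ⟨a⟩
  have hN : (Fintype.card n : ℂ) ≠ 0 := Nat.cast_ne_zero.mpr Fintype.card_ne_zero
  rw [hval, eq_div_iff (mul_ne_zero hN (Nat.cast_add_one_ne_zero _))]
  linear_combination (1 + if a = c then (1 : ℂ) else 0) * hsum

theorem quarticMoment_eq (a b c d : n) :
    quarticMoment μ j a b c d =
      ((if a = b then 1 else 0) * (if c = d then 1 else 0) +
        (if a = d then 1 else 0) * (if c = b then 1 else 0)) /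
      (Fintype.card n * (Fintype.card n + 1)) := by
  by_cases h₁ : a = b ∧ c = d
  · obtain ⟨rfl, rfl⟩ := h₁
    rw [quarticMoment_self_self]
    by_cases hac : a = c <;> simp [hac, eq_comm (a := c)]
  by_cases h₂ : a = d ∧ c = b
  · obtain ⟨rfl, rfl⟩ := h₂
    rw [← quarticMoment_swap₁₃, quarticMoment_swap_pairs, quarticMoment_self_self, add_comm]
    by_cases hac : a = c <;> simp [hac, eq_comm (a := c)]
  · rw [quarticMoment_eq_zero μ j h₁ h₂]
    split_ifs <;> simp_all

theorem integral_trace_mul_trace_mul (M₁ M₂ : Matrix n n ℂ) :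
    ∫ W : unitaryGroup n ℂ,
        trace (M₁ * ((W : Matrix n n ℂ) * vecMulVec (Pi.single j 1) (star (Pi.single j 1)) *
          (W : Matrix n n ℂ)ᴴ)) *
        trace (M₂ * ((W : Matrix n n ℂ) * vecMulVec (Pi.single j 1) (star (Pi.single j 1)) *
          (W : Matrix n n ℂ)ᴴ)) ∂μ =
      (trace M₁ * trace M₂ + trace (M₁ * M₂)) / (Fintype.card n * (Fintype.card n + 1)) := by
  have hq := integrable_quartic μ j
  simp only [trace_mul_mul_vecMulVec_single_mul_conjTranspose, Finset.sum_mul_sum,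
    mul_mul_mul_comm (M₁ _ _) _ (M₂ _ _)]
  simp (disch := intros; fun_prop) only [integral_finsetSum, integral_const_mul]
  simp only [← quarticMoment.eq_1, quarticMoment_eq, ← mul_div_assoc, ← Finset.sum_div]
  congr 1
  simp [mul_add, Finset.sum_add_distrib, trace, mul_apply, Finset.mul_sum, Finset.sum_mul]
  exact Finset.sum_comm

end QuarticMoment

/-- Mixed second-moment identity for Haar-random pure states:
`∫ Tr(M₁ X_W) Tr(M₂ X_W) dμ(W) = (Tr M₁ Tr M₂ + Tr (M₁ M₂)) / (D(D+1))`
where `X_W = W e₀e₀ᴴ Wᴴ`. -/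
theorem haar_mixed_second_moment (D : ℕ) (hD : 1 ≤ D)
    (μ : Measure (Matrix.unitaryGroup (Fin D) ℂ))
    [μ.IsHaarMeasure] [IsProbabilityMeasure μ]
    (M₁ M₂ : Matrix (Fin D) (Fin D) ℂ) :
    (∫ W : Matrix.unitaryGroup (Fin D) ℂ,
        Matrix.trace (M₁ * ((W : Matrix (Fin D) (Fin D) ℂ) *
            Matrix.vecMulVec e0 (star e0) * (W : Matrix (Fin D) (Fin D) ℂ)ᴴ)) *
          Matrix.trace (M₂ * ((W : Matrix (Fin D) (Fin D) ℂ) *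
            Matrix.vecMulVec e0 (star e0) * (W : Matrix (Fin D) (Fin D) ℂ)ᴴ)) ∂μ) =
      (Matrix.trace M₁ * Matrix.trace M₂ + Matrix.trace (M₁ * M₂)) /
        ((D : ℂ) * ((D : ℂ) + 1)) := by
  have he : (e0 : Fin D → ℂ) = Pi.single ⟨0, hD⟩ 1 := by
    ext i
    simp [e0, Pi.single_apply, Fin.ext_iff]
  rw [he, integral_trace_mul_trace_mul, Fintype.card_fin]
end
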